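/- Let L/K be a finite Galois extension of local fields with K strictly contained in L and residue characteristic p. If p divides d_{L/K} + 1 (equivalently, p divides −d_{L/K} − 1), then VC(L/K) does not hold. -/

import Mathlib

/-! Galois conjugation preserves `v_L`, because the valuation of the complete field `K` extends
uniquely to `L` (as the spectral norm). By the characterization of the different there is `x₀`
with `v_L(x₀) = -d-1` and `v_K(Tr x₀) = -1`; writing the trace as a sum of conjugates also gives
`d + 1 ≥ e`.

If `p ∣ [L:K]`, pick `σ` of order `p` and `y` with `p · v_L(y) = -d-1`: the product of the
`σ^i y` is fixed by `σ ≠ 1`, so it is not a normal basis generator. Otherwise `[L:K]` is a unit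
of `O_K`. If `e ∣ d+1`, the element `1` satisfies the valuation condition but is fixed by all of
`Gal(L/K) ≠ 1`; if not, then `d+1 > e`, so `x₀ - Tr(x₀)/[L:K]` still has valuation `-d-1`, and
its conjugates sum to its trace `0`. -/

/-- A local field structure on a field `K`: a normalized (surjective) discrete
valuation `v : K* ↠ ℤ`, extended by a junk value at `0`, with respect to which
`K` is complete. -/
structure LocalFieldStruct (K : Type) [Field K] where
  /-- the valuation; its value at `0` is irrelevant -/
  v : K → ℤ
  v_mul : ∀ x y : K, x ≠ 0 → y ≠ 0 → v (x * y) = v x + v y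
  v_add : ∀ x y : K, x ≠ 0 → y ≠ 0 → x + y ≠ 0 → min (v x) (v y) ≤ v (x + y)
  v_surj : ∀ n : ℤ, ∃ x : K, x ≠ 0 ∧ v x = n
  complete : ∀ a : ℕ → K,
      (∀ N : ℤ, ∃ M : ℕ, ∀ m : ℕ, M ≤ m → ∀ n : ℕ, M ≤ n →
        a m = a n ∨ N ≤ v (a m - a n)) →
      ∃ x : K, ∀ N : ℤ, ∃ M : ℕ, ∀ n : ℕ, M ≤ n → a n = x ∨ N ≤ v (a n - x)

namespace LocalFieldStruct

variable {K L : Type} [Field K] [Field L]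

/-- `x` lies in the valuation ring `O_K`. -/
def Integral (w : LocalFieldStruct K) (x : K) : Prop :=
  x = 0 ∨ 0 ≤ w.v x

/-- The residue characteristic of `K` is the prime `p`, i.e. `p` maps to `0`
in the residue field of the valuation ring. -/
def ResidueCharP (w : LocalFieldStruct K) (p : ℕ) : Prop :=
  p.Prime ∧ ((p : K) = 0 ∨ 0 < w.v (p : K))

/-- `K` has mixed characteristic `(0, p)`: `K` has characteristic `0` and its
residue field has characteristic `p > 0`. -/
def MixedChar (w : LocalFieldStruct K) (p : ℕ) : Prop :=
  CharZero K ∧ p.Prime ∧ 0 < w.v (p : K)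

/-- `e` is the ramification index `e_{L/K}`: the valuation of `L` restricted to
`K` is `e` times the valuation of `K`. -/
def IsRamificationIndex (wK : LocalFieldStruct K) (wL : LocalFieldStruct L)
    [Algebra K L] (e : ℕ) : Prop :=
  0 < e ∧ ∀ x : K, x ≠ 0 → wL.v (algebraMap K L x) = (e : ℤ) * wK.v x

/-- `d` is the valuation `d_{L/K}` of the different of `L/K`, characterized by
`Tr_{L/K}(𝔭_L^i) ⊆ O_K ↔ i ≥ -d` for all `i : ℤ`. -/
def IsDifferentVal (wK : LocalFieldStruct K) (wL : LocalFieldStruct L)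
    [Algebra K L] (d : ℤ) : Prop :=
  ∀ i : ℤ,
    (∀ x : L, (x ≠ 0 → i ≤ wL.v x) → wK.Integral (Algebra.trace K L x)) ↔ -d ≤ i

end LocalFieldStruct

/-- `x` is a normal basis generator of `L` over `K`: the Galois conjugates of
`x` form a `K`-basis of `L`. -/
def IsNormalElement (K : Type) [Field K] {L : Type} [Field L] [Algebra K L]
    (x : L) : Prop :=
  LinearIndependent K (fun σ : L ≃ₐ[K] L => σ x) ∧
    Submodule.span K (Set.range fun σ : L ≃ₐ[K] L => σ x) = ⊤

/-- The valuation criterion `VC(L/K)`, for an extension with ramification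
index `e` and different of valuation `d`: every nonzero `x ∈ L` with
`v_L(x) ≡ -d-1 (mod e)` is a normal basis generator of `L` over `K`. -/
def VC (K : Type) [Field K] {L : Type} [Field L] [Algebra K L]
    (wL : LocalFieldStruct L) (e : ℕ) (d : ℤ) : Prop :=
  ∀ x : L, x ≠ 0 → Int.ModEq (e : ℤ) (wL.v x) (-d - 1) → IsNormalElement K x

open Finset

namespace LocalFieldStruct

section Valuation

variable {K : Type} [Field K] (w : LocalFieldStruct K)

theorem v_one : w.v 1 = 0 := by
  have h := w.v_mul 1 1 one_ne_zero one_ne_zero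
  rw [mul_one] at h
  omega

theorem v_neg {x : K} (hx : x ≠ 0) : w.v (-x) = w.v x := by
  have h1 := w.v_mul (-1) (-1) (by norm_num) (by norm_num)
  have h2 := w.v_mul (-1) x (by norm_num) hx
  rw [neg_mul_neg, one_mul, w.v_one] at h1
  rw [neg_one_mul] at h2
  omega

theorem v_sub_eq_left {a b : K} (ha : a ≠ 0) (hb : b ≠ 0) (hab : w.v a < w.v b) :
    w.v (a - b) = w.v a := by
  have hne : a - b ≠ 0 := sub_ne_zero.mpr fun h => (h ▸ hab).false
  have h1 := w.v_add a (-b) ha (neg_ne_zero.mpr hb) (by rwa [← sub_eq_add_neg])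
  have h2 := w.v_add (a - b) b hne hb (by rwa [sub_add_cancel])
  rw [w.v_neg hb, ← sub_eq_add_neg] at h1
  rw [sub_add_cancel] at h2
  omega

theorem v_prod {ι : Type*} (s : Finset ι) (f : ι → K) (h : ∀ i ∈ s, f i ≠ 0) :
    w.v (∏ i ∈ s, f i) = ∑ i ∈ s, w.v (f i) := by
  induction s using Finset.cons_induction with
  | empty => simpa using w.v_one
  | cons a s ha ih =>
    rw [prod_cons, sum_cons, w.v_mul _ _ (h a (mem_cons_self a s))
      (prod_ne_zero_iff.mpr fun i hi => h i (mem_cons_of_mem hi)),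
      ih fun i hi => h i (mem_cons_of_mem hi)]

theorem v_eq_zero_of_add_eq_one {a b : K} (hab : a + b = 1) (ha : a = 0 ∨ 0 < w.v a) :
    b ≠ 0 ∧ w.v b = 0 := by
  rw [← eq_sub_iff_add_eq'] at hab
  subst hab
  by_cases ha0 : a = 0
  · simpa [ha0] using w.v_one
  have hv := ha.resolve_left ha0
  rw [← w.v_one] at hv ⊢
  exact ⟨sub_ne_zero.mpr fun h => (h ▸ hv).false, w.v_sub_eq_left one_ne_zero ha0 hv⟩

end Valuation

section AbsoluteValue

variable {K : Type} [Field K] (w : LocalFieldStruct K) {b : ℝ}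

open Classical in
theorem isNonarchimedean_zpow_neg_v (hb : 1 ≤ b) :
    IsNonarchimedean fun x : K => if x = 0 then 0 else b ^ (-w.v x) := by
  intro x y
  by_cases hx : x = 0
  · simp [hx]
  by_cases hy : y = 0
  · simp [hy]
  by_cases hxy : x + y = 0
  · simp only [hx, hy, hxy, if_true, if_false]
    exact le_max_of_le_left (zpow_nonneg (by linarith) _)
  simp only [hx, hy, hxy, if_false]
  have := w.v_add x y hx hy hxy
  rcases le_total (w.v x) (w.v y) with h | h
  · exact le_max_of_le_left (zpow_le_zpow_right₀ hb (by omega))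
  · exact le_max_of_le_right (zpow_le_zpow_right₀ hb (by omega))

open Classical in
noncomputable def absVal (hb : 1 < b) : AbsoluteValue K ℝ where
  toFun x := if x = 0 then 0 else b ^ (-w.v x)
  map_mul' x y := by
    by_cases hx : x = 0
    · simp [hx]
    by_cases hy : y = 0
    · simp [hy]
    simp [hx, hy, w.v_mul x y hx hy, zpow_add₀ (by positivity : b ≠ 0), mul_comm]
  nonneg' x := by
    split_ifs
    · exact le_rfl
    · positivity
  eq_zero' x := by
    split_ifs with hx
    · simp [hx]
    · simp [hx, (zpow_pos (by linarith : (0 : ℝ) < b) _).ne']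
  add_le' _ _ :=
    (w.isNonarchimedean_zpow_neg_v hb.le).add_le fun _ => by split_ifs <;> positivity

theorem absVal_of_ne_zero (hb : 1 < b) {x : K} (hx : x ≠ 0) : w.absVal hb x = b ^ (-w.v x) :=
  if_neg hx

theorem isNonarchimedean_absVal (hb : 1 < b) : IsNonarchimedean (w.absVal hb) :=
  w.isNonarchimedean_zpow_neg_v hb.le

theorem absVal_le_zpow_iff (hb : 1 < b) (x : K) (N : ℤ) :
    w.absVal hb x ≤ b ^ (-N) ↔ x = 0 ∨ N ≤ w.v x := by
  by_cases hx : x = 0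
  · simp [hx, zpow_nonneg (by linarith : (0 : ℝ) ≤ b)]
  rw [w.absVal_of_ne_zero hb hx, zpow_le_zpow_iff_right₀ hb, or_iff_right hx]
  omega

theorem absVal_le_absVal_iff (hb : 1 < b) {x y : K} (hx : x ≠ 0) (hy : y ≠ 0) :
    w.absVal hb x ≤ w.absVal hb y ↔ w.v y ≤ w.v x := by
  rw [w.absVal_of_ne_zero hb hx, w.absVal_of_ne_zero hb hy, zpow_le_zpow_iff_right₀ hb]
  omega

theorem v_intCast_nonneg {k : ℤ} (hk : (k : K) ≠ 0) : 0 ≤ w.v k := by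
  have := (w.isNonarchimedean_absVal one_lt_two).apply_intCast_le_one (n := k)
  rw [← zpow_zero (2 : ℝ), ← neg_zero, absVal_le_zpow_iff] at this
  exact this.resolve_left hk

theorem exists_v_le_v_sum {ι : Type*} {s : Finset ι} (hs : s.Nonempty) {f : ι → K}
    (hsum : ∑ i ∈ s, f i ≠ 0) : ∃ i ∈ s, f i ≠ 0 ∧ w.v (f i) ≤ w.v (∑ i ∈ s, f i) := by
  obtain ⟨i, hi, hle⟩ :=
    (w.isNonarchimedean_absVal one_lt_two).finset_image_add_of_nonempty f hs
  have hfi : f i ≠ 0 := by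
    rintro h
    rw [h, map_zero] at hle
    exact hsum ((AbsoluteValue.nonpos_iff _).mp hle)
  exact ⟨i, hi, hfi, (w.absVal_le_absVal_iff one_lt_two hsum hfi).mp hle⟩

noncomputable abbrev nontriviallyNormedField (hb : 1 < b) : NontriviallyNormedField K :=
  { (w.absVal hb).toNormedField with
    non_trivial := by
      obtain ⟨c, hc0, hc⟩ := w.v_surj (-1)
      refine ⟨c, ?_⟩
      change 1 < w.absVal hb c
      rwa [w.absVal_of_ne_zero hb hc0, hc, neg_neg, zpow_one] }

end AbsoluteValue

theorem completeSpace_of_norm_eq {K : Type} [NormedField K] (w : LocalFieldStruct K) {b : ℝ}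
    (hb : 1 < b) (hnorm : ∀ x : K, ‖x‖ = w.absVal hb x) :
    CompleteSpace K := by
  have hdist (x y : K) (N : ℤ) : dist x y ≤ b ^ (-N) ↔ x = y ∨ N ≤ w.v (x - y) := by
    rw [dist_eq_norm, hnorm, absVal_le_zpow_iff, sub_eq_zero]
  refine Metric.complete_of_cauchySeq_tendsto fun u hu => ?_
  obtain ⟨x, hx⟩ := w.complete u fun N => by
    obtain ⟨M, hM⟩ := Metric.cauchySeq_iff.mp hu _ (zpow_pos (by linarith : (0 : ℝ) < b) (-N))
    exact ⟨M, fun m hm n hn => (hdist _ _ N).mp (hM m hm n hn).le⟩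
  refine ⟨x, Metric.tendsto_atTop.mpr fun ε hε => ?_⟩
  obtain ⟨N, hN⟩ := exists_pow_lt_of_lt_one hε (inv_lt_one_of_one_lt₀ hb)
  obtain ⟨M, hM⟩ := hx N
  refine ⟨M, fun n hn => ((hdist _ _ N).mpr (hM n hn)).trans_lt ?_⟩
  rwa [zpow_neg, zpow_natCast, ← inv_pow]

theorem ResidueCharP.natCast_ne_zero_and_v_eq_zero {K : Type} [Field K] {w : LocalFieldStruct K}
    {p : ℕ} (hp : w.ResidueCharP p) {n : ℕ} (hn : ¬ p ∣ n) : (n : K) ≠ 0 ∧ w.v n = 0 := by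
  obtain ⟨a, c, hac⟩ := Nat.isCoprime_iff_coprime.mpr ((hp.1.coprime_iff_not_dvd).mpr hn)
  have hK : (a * p : K) + c * n = 1 := by exact_mod_cast congrArg (Int.cast : ℤ → K) hac
  have hap : (a * p : K) = 0 ∨ 0 < w.v (a * p : K) := by
    by_cases h0 : (a * p : K) = 0
    · exact Or.inl h0
    obtain ⟨ha, hp0⟩ := mul_ne_zero_iff.mp h0
    rw [w.v_mul _ _ ha hp0]
    exact Or.inr (by linarith [w.v_intCast_nonneg ha, hp.2.resolve_left hp0])
  obtain ⟨hcn0, hcn⟩ := w.v_eq_zero_of_add_eq_one hK hap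
  obtain ⟨hc0, hn0⟩ := mul_ne_zero_iff.mp hcn0
  refine ⟨hn0, ?_⟩
  have hc := w.v_intCast_nonneg hc0
  have hn := w.v_intCast_nonneg (k := n) (by exact_mod_cast hn0)
  push_cast at hn
  rw [w.v_mul _ _ hc0 hn0] at hcn
  omega

section Extension

variable {K L : Type} [Field K] [Field L] [Algebra K L]
  {wK : LocalFieldStruct K} {wL : LocalFieldStruct L} {e : ℕ} {d : ℤ}

theorem IsRamificationIndex.absVal_algebraMap (he : IsRamificationIndex wK wL e) {b : ℝ}
    (hb : 1 < b) (c : K) :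
    wL.absVal hb (algebraMap K L c) = wK.absVal (one_lt_pow₀ hb he.1.ne') c := by
  by_cases hc : c = 0
  · simp [hc]
  rw [wL.absVal_of_ne_zero hb ((map_ne_zero _).mpr hc), wK.absVal_of_ne_zero _ hc, he.2 c hc,
    ← zpow_natCast, ← zpow_mul, mul_neg]

theorem IsRamificationIndex.v_algEquiv_apply [FiniteDimensional K L]
    (he : IsRamificationIndex wK wL e) (σ : L ≃ₐ[K] L) (x : L) : wL.v (σ x) = wL.v x := by
  have hb : (1 : ℝ) < 2 ^ e := one_lt_pow₀ one_lt_two he.1.ne'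
  let := wK.nontriviallyNormedField hb
  have : CompleteSpace K := completeSpace_of_norm_eq wK hb fun _ => rfl
  have : IsUltrametricDist K :=
    IsUltrametricDist.isUltrametricDist_of_isNonarchimedean_norm (wK.isNonarchimedean_absVal hb)
  have hσ : wL.absVal one_lt_two (σ x) = wL.absVal one_lt_two x := by
    rw [spectralNorm_unique_field_norm_ext (he.absVal_algebraMap one_lt_two),
      spectralNorm_unique_field_norm_ext (he.absVal_algebraMap one_lt_two),
      ← spectralNorm_eq_of_equiv σ x]
  by_cases hx : x = 0
  · rw [hx, map_zero]
  have hσx : σ x ≠ 0 := (map_ne_zero_iff _ σ.injective).mpr hx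
  exact le_antisymm ((wL.absVal_le_absVal_iff one_lt_two hx hσx).mp hσ.ge)
    ((wL.absVal_le_absVal_iff one_lt_two hσx hx).mp hσ.le)

theorem IsRamificationIndex.exists_apply_eq_self_v_eq [FiniteDimensional K L]
    (he : IsRamificationIndex wK wL e) (σ : L ≃ₐ[K] L) (m : ℤ) :
    ∃ x : L, x ≠ 0 ∧ σ x = x ∧ wL.v x = orderOf σ * m := by
  obtain ⟨y, hy0, hy⟩ := wL.v_surj m
  have hσy (i : ℕ) : (σ ^ i) y ≠ 0 := (map_ne_zero_iff _ (σ ^ i).injective).mpr hy0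
  refine ⟨∏ i ∈ range (orderOf σ), (σ ^ i) y, prod_ne_zero_iff.mpr fun i _ => hσy i, ?_, ?_⟩
  · have h := prod_range_succ' (fun i => (σ ^ i) y) (orderOf σ)
    rw [prod_range_succ, pow_orderOf_eq_one] at h
    simp only [map_prod, ← AlgEquiv.mul_apply, ← pow_succ']
    exact mul_right_cancel₀ hy0 (by simpa using h.symm)
  · rw [wL.v_prod _ _ fun i _ => hσy i]
    simp only [he.v_algEquiv_apply, hy, sum_const, card_range, nsmul_eq_mul]

theorem IsDifferentVal.exists_v_trace_eq_neg_one (he : IsRamificationIndex wK wL e)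
    (hd : IsDifferentVal wK wL d) :
    ∃ x : L, x ≠ 0 ∧ wL.v x = -d - 1 ∧ Algebra.trace K L x ≠ 0 ∧
      wK.v (Algebra.trace K L x) = -1 := by
  have hInt := (hd (-d)).mpr le_rfl
  obtain ⟨x, hxv, htr, hneg⟩ : ∃ x : L, (x ≠ 0 → -d - 1 ≤ wL.v x) ∧
      Algebra.trace K L x ≠ 0 ∧ wK.v (Algebra.trace K L x) < 0 := by
    by_contra! h
    have := (hd (-d - 1)).mp fun x hx => or_iff_not_imp_left.mpr (h x hx)
    omega
  have hx0 : x ≠ 0 := by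
    rintro rfl
    exact htr (map_zero _)
  have hvx : wL.v x = -d - 1 := by
    refine le_antisymm ?_ (hxv hx0)
    by_contra! h
    have := (hInt x fun _ => by omega).resolve_left htr
    omega
  refine ⟨x, hx0, hvx, htr, le_antisymm (by omega) ?_⟩
  -- multiplying by a uniformizer of `K` moves `x` into `𝔭_L^(-d)`
  obtain ⟨π, hπ0, hπ⟩ := wK.v_surj 1
  have hπx := hInt (algebraMap K L π * x) fun _ => by
    rw [wL.v_mul _ _ ((map_ne_zero _).mpr hπ0) hx0, he.2 π hπ0, hπ, hvx]
    linarith [he.1]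
  rw [← Algebra.smul_def, map_smul, smul_eq_mul] at hπx
  have := hπx.resolve_left (mul_ne_zero hπ0 htr)
  rw [wK.v_mul _ _ hπ0 htr, hπ] at this
  omega

theorem IsDifferentVal.le_add_one [FiniteDimensional K L] [IsGalois K L]
    (he : IsRamificationIndex wK wL e) (hd : IsDifferentVal wK wL d) : (e : ℤ) ≤ d + 1 := by
  suffices h : ∀ x : L, (x ≠ 0 → 1 - e ≤ wL.v x) → wK.Integral (Algebra.trace K L x) by
    have := (hd (1 - e)).mp h
    omega
  intro x hx
  by_cases htr : Algebra.trace K L x = 0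
  · exact Or.inl htr
  have hsum : ∑ σ : L ≃ₐ[K] L, σ x ≠ 0 := by
    rw [← trace_eq_sum_automorphisms]
    exact (map_ne_zero _).mpr htr
  obtain ⟨σ, -, hσx, hle⟩ := wL.exists_v_le_v_sum univ_nonempty hsum
  rw [← trace_eq_sum_automorphisms, he.2 _ htr, he.v_algEquiv_apply] at hle
  have hx0 : x ≠ 0 := by
    rintro rfl
    exact hσx (map_zero σ)
  have := hx hx0
  refine Or.inr (not_lt.mp fun hneg => ?_)
  nlinarith [he.1]

theorem IsDifferentVal.exists_trace_eq_zero [FiniteDimensional K L] [IsGalois K L]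
    (he : IsRamificationIndex wK wL e) (hd : IsDifferentVal wK wL d)
    (hn0 : (Module.finrank K L : K) ≠ 0) (hvn : wK.v (Module.finrank K L : K) = 0)
    (hed : ¬ (e : ℤ) ∣ d + 1) :
    ∃ y : L, y ≠ 0 ∧ wL.v y = -d - 1 ∧ Algebra.trace K L y = 0 := by
  obtain ⟨x, hx0, hvx, htr, hvtr⟩ := hd.exists_v_trace_eq_neg_one he
  set c : K := Algebra.trace K L x / Module.finrank K L
  have hc0 : c ≠ 0 := div_ne_zero htr hn0
  have hvc : wL.v (algebraMap K L c) = -e := by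
    have := wK.v_mul c _ hc0 hn0
    rw [div_mul_cancel₀ _ hn0, hvn, hvtr] at this
    rw [he.2 c hc0, ← add_zero (wK.v c), ← this, mul_neg_one]
  have hlt : wL.v x < wL.v (algebraMap K L c) := by
    have hne : (e : ℤ) ≠ d + 1 := fun h => hed (h ▸ dvd_rfl)
    have := hd.le_add_one he
    omega
  refine ⟨x - algebraMap K L c, sub_ne_zero.mpr fun h => (h ▸ hlt).false, ?_, ?_⟩
  · rw [wL.v_sub_eq_left hx0 ((map_ne_zero _).mpr hc0) hlt, hvx]
  · rw [map_sub, Algebra.trace_algebraMap, nsmul_eq_mul, mul_div_cancel₀ _ hn0, sub_self]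

end Extension

end LocalFieldStruct

section NormalElement

variable {K L : Type} [Field K] [Field L] [Algebra K L]

theorem not_isNormalElement_of_apply_eq_self {σ : L ≃ₐ[K] L} (hσ : σ ≠ 1) {x : L}
    (hx : σ x = x) : ¬ IsNormalElement K x := fun h =>
  hσ (h.1.injective (show σ x = (1 : L ≃ₐ[K] L) x from hx))

theorem not_isNormalElement_of_trace_eq_zero [FiniteDimensional K L] [IsGalois K L] {x : L}
    (hx : Algebra.trace K L x = 0) : ¬ IsNormalElement K x := by
  rintro ⟨hli, -⟩
  have hsum : ∑ σ : L ≃ₐ[K] L, (1 : K) • σ x = 0 := by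
    simp only [one_smul, ← trace_eq_sum_automorphisms, hx, map_zero]
  exact one_ne_zero (Fintype.linearIndependent_iff.mp hli _ hsum 1)

end NormalElement

open LocalFieldStruct in
/-- Let `L/K` be a finite Galois extension of local fields with `K ⊊ L` and
residue characteristic `p`.  If `p ∣ d_{L/K} + 1`, then `VC(L/K)` does not
hold. -/
theorem statement16 {K L : Type} [Field K] [Field L] [Algebra K L]
    [FiniteDimensional K L] [IsGalois K L]
    (wK : LocalFieldStruct K) (wL : LocalFieldStruct L)
    (p : ℕ) (hp : wK.ResidueCharP p)
    (hproper : 1 < Module.finrank K L)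
    (e : ℕ) (he : IsRamificationIndex wK wL e)
    (d : ℤ) (hd : IsDifferentVal wK wL d)
    (hdvd : (p : ℤ) ∣ d + 1) :
    ¬ VC K wL e d := by
  intro hVC
  have hcard : Nat.card (L ≃ₐ[K] L) = Module.finrank K L := IsGalois.card_aut_eq_finrank K L
  by_cases hpn : p ∣ Module.finrank K L
  · have := Fact.mk hp.1
    obtain ⟨σ, hσ⟩ := exists_prime_orderOf_dvd_card' p (hcard ▸ hpn)
    obtain ⟨α, hα⟩ := hdvd
    obtain ⟨x, hx0, hσx, hxv⟩ := he.exists_apply_eq_self_v_eq σ (-α)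
    have hσ1 : σ ≠ 1 := by
      rintro rfl
      exact hp.1.one_lt.ne (orderOf_one.symm.trans hσ)
    refine not_isNormalElement_of_apply_eq_self hσ1 hσx (hVC x hx0 ?_)
    rw [hxv, hσ, show (p : ℤ) * -α = -d - 1 by linarith]
  obtain ⟨hn0, hvn⟩ := hp.natCast_ne_zero_and_v_eq_zero hpn
  by_cases hed : (e : ℤ) ∣ d + 1
  · have : Nontrivial (L ≃ₐ[K] L) := Finite.one_lt_card_iff_nontrivial.mp (hcard ▸ hproper)
    obtain ⟨σ, hσ⟩ := exists_ne (1 : L ≃ₐ[K] L)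
    refine not_isNormalElement_of_apply_eq_self hσ (map_one σ) (hVC 1 one_ne_zero ?_)
    rw [wL.v_one, Int.modEq_iff_dvd, sub_zero, ← neg_add']
    exact hed.neg_right
  · obtain ⟨y, hy0, hyv, htr⟩ := hd.exists_trace_eq_zero he hn0 hvn hed
    exact not_isNormalElement_of_trace_eq_zero htr (hVC y hy0 (by rw [hyv]))
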